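/- arXiv:2507.20820 — 5 statements merged into one kernel-verified Lean document; each statement's English description precedes it below -/
import Mathlib

section
/- Let Ω be a frame and (M, A, t) a symmetric Ω-category as above (M(a,b) ≤ ta ⊓ tb, ta ≤ M(a,a), M(a,b) ⊓ M(b,c) ≤ M(a,c), M symmetric). Let (a_i)_{i∈I} be a matching family, i.e. t a_i ⊓ t a_j ≤ M(a_i, a_j) for all i,j. Define σ(b) = ⨆_{i∈I} M(b, a_i). Then σ is a symmetric singleton of type U = ⨆_i t a_i: (i) M(b,c) ⊓ σ(c) ≤ σ(b); (ii) σ(b) ⊓ σ(c) ≤ M(b,c); (iii) U ≤ ⨆_b σ(b). -/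
/-!
Everything follows from frame distributivity, which reduces each inequality between joins to one
between the individual terms. For (ii) the key point is that two sections `M b (a i)` and
`M c (a j)` both lie below `t (a i) ⊓ t (a j)`, where the matching condition lets us pass from
`a i` to `a j`; transitivity then carries `b` through `a i` and `a j` to `c`.
-/

section OmegaCategory

variable {Ω : Type*} {A : Type*} {t : A → Ω} {M : A → A → Ω}

theorem inf_le_of_extent_inf_le [SemilatticeInf Ω]
    (hbound : ∀ a b, M a b ≤ t a ⊓ t b)
    (htrans : ∀ a b c, M a b ⊓ M b c ≤ M a c)
    (hsymm : ∀ a b, M a b = M b a)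
    {b c x y : A} (hxy : t x ⊓ t y ≤ M x y) :
    M b x ⊓ M c y ≤ M b c := by
  have hle_xy : M b x ⊓ M c y ≤ M x y :=
    (inf_le_inf ((hbound b x).trans inf_le_right) ((hbound c y).trans inf_le_right)).trans hxy
  calc M b x ⊓ M c y ≤ (M b x ⊓ M x y) ⊓ M y c := by
        rw [hsymm y c]
        exact le_inf (le_inf inf_le_left hle_xy) inf_le_right
    _ ≤ M b y ⊓ M y c := inf_le_inf_right _ (htrans b x y)
    _ ≤ M b c := htrans b y c

variable [Order.Frame Ω] {I : Type*}

theorem inf_iSup_le_iSup_of_trans (htrans : ∀ a b c, M a b ⊓ M b c ≤ M a c)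
    (a : I → A) (b c : A) :
    M b c ⊓ (⨆ i, M c (a i)) ≤ ⨆ i, M b (a i) := by
  rw [inf_iSup_eq]
  exact iSup_mono fun i => htrans b c (a i)

theorem iSup_inf_iSup_le_of_matching
    (hbound : ∀ a b, M a b ≤ t a ⊓ t b)
    (htrans : ∀ a b c, M a b ⊓ M b c ≤ M a c)
    (hsymm : ∀ a b, M a b = M b a)
    {a : I → A} (hmatch : ∀ i j, t (a i) ⊓ t (a j) ≤ M (a i) (a j)) (b c : A) :
    (⨆ i, M b (a i)) ⊓ (⨆ i, M c (a i)) ≤ M b c := by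
  rw [iSup_inf_iSup]
  exact iSup_le fun ij => inf_le_of_extent_inf_le hbound htrans hsymm (hmatch ij.1 ij.2)

theorem iSup_extent_le_iSup_iSup (hrefl : ∀ a, t a ≤ M a a) (a : I → A) :
    (⨆ i, t (a i)) ≤ ⨆ b, ⨆ i, M b (a i) :=
  iSup_le fun i => le_iSup₂_of_le (a i) i (hrefl (a i))

end OmegaCategory

/-- Glueing singletons: for a matching family `(a_i)` in a symmetric `Ω`-category over a
frame `Ω`, the map `σ b = ⨆ i, M b (a i)` is a symmetric singleton of type `⨆ i, t (a i)`. -/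
theorem stmt_10 {Ω : Type*} [Order.Frame Ω] {A : Type*} (t : A → Ω) (M : A → A → Ω)
    (hbound : ∀ a b, M a b ≤ t a ⊓ t b)
    (hrefl : ∀ a, t a ≤ M a a)
    (htrans : ∀ a b c, M a b ⊓ M b c ≤ M a c)
    (hsymm : ∀ a b, M a b = M b a)
    {I : Type*} (a : I → A)
    (hmatch : ∀ i j, t (a i) ⊓ t (a j) ≤ M (a i) (a j)) :
    (∀ b c, M b c ⊓ (⨆ i, M c (a i)) ≤ ⨆ i, M b (a i)) ∧
    (∀ b c, (⨆ i, M b (a i)) ⊓ (⨆ i, M c (a i)) ≤ M b c) ∧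
    ((⨆ i, t (a i)) ≤ ⨆ b : A, ⨆ i, M b (a i)) :=
  ⟨inf_iSup_le_iSup_of_trans htrans a,
    iSup_inf_iSup_le_of_matching hbound htrans hsymm hmatch,
    iSup_extent_le_iSup_iSup hrefl a⟩
end

section
/- Let F be a presheaf of sets on a topological space X. For sections s ∈ F(U), t ∈ F(V) (over open sets U, V), define M(s,t) ⊆ X as the union of all open sets W ⊆ U ∩ V such that s|_W = t|_W. Then: (i) U ⊆ M(s,s) for s ∈ F(U); (ii) M(s,t) = M(t,s); (iii) M(s,t) ∩ M(t,u) ⊆ M(s,u) for any three sections s,t,u. Hence the set of all sections of F, typed by their domains, forms a symmetric category enriched in the quantaloid of open subsets of X. -/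
open CategoryTheory TopologicalSpace Opposite

/-- The "local equality" of two sections `s, t` of a presheaf: the union of all opens
`W` contained in both domains on which the restrictions of `s` and `t` agree. -/
def locEq {X : Type*} [TopologicalSpace X] (F : (Opens X)ᵒᵖ ⥤ Type*)
    (s t : Σ U : Opens X, F.obj (op U)) : Opens X :=
  sSup {W | ∃ (h1 : W ≤ s.1) (h2 : W ≤ t.1),
    F.map (homOfLE h1).op s.2 = F.map (homOfLE h2).op t.2}

section

variable {X : Type*} [TopologicalSpace X] (F : (Opens X)ᵒᵖ ⥤ Type*)

theorem map_homOfLE_map_homOfLE {U V W : Opens X} (hVU : V ≤ U) (hWV : W ≤ V)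
    (x : F.obj (op U)) :
    F.map (homOfLE hWV).op (F.map (homOfLE hVU).op x) = F.map (homOfLE (hWV.trans hVU)).op x :=
  (F.map_comp_apply _ _ x).symm

variable {F}

theorem le_locEq {s t : Σ U : Opens X, F.obj (op U)} {W : Opens X} (hs : W ≤ s.1) (ht : W ≤ t.1)
    (h : F.map (homOfLE hs).op s.2 = F.map (homOfLE ht).op t.2) : W ≤ locEq F s t :=
  le_sSup ⟨hs, ht, h⟩

theorem le_locEq_self (s : Σ U : Opens X, F.obj (op U)) : s.1 ≤ locEq F s s :=
  le_locEq le_rfl le_rfl rfl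

theorem locEq_le_locEq_swap (s t : Σ U : Opens X, F.obj (op U)) :
    locEq F s t ≤ locEq F t s :=
  sSup_le fun _ ⟨hs, ht, h⟩ => le_locEq ht hs h.symm

theorem locEq_comm (s t : Σ U : Opens X, F.obj (op U)) : locEq F s t = locEq F t s :=
  (locEq_le_locEq_swap s t).antisymm (locEq_le_locEq_swap t s)

/-- `Opens X` is a frame, so the meet of two unions is the union of the pairwise meets. -/
theorem locEq_inf_locEq_le (s t u : Σ U : Opens X, F.obj (op U)) :
    locEq F s t ⊓ locEq F t u ≤ locEq F s u := by
  rw [locEq, locEq, sSup_inf_sSup]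
  refine iSup₂_le fun ⟨W₁, W₂⟩ ⟨⟨hs, ht₁, h₁⟩, ⟨ht₂, hu, h₂⟩⟩ =>
    le_locEq (inf_le_left.trans hs) (inf_le_right.trans hu) ?_
  have hW₁ : W₁ ⊓ W₂ ≤ W₁ := inf_le_left
  have hW₂ : W₁ ⊓ W₂ ≤ W₂ := inf_le_right
  calc F.map (homOfLE (hW₁.trans hs)).op s.2
      = F.map (homOfLE hW₁).op (F.map (homOfLE ht₁).op t.2) := by
        rw [← h₁, map_homOfLE_map_homOfLE]
    _ = F.map (homOfLE hW₂).op (F.map (homOfLE ht₂).op t.2) := by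
        rw [map_homOfLE_map_homOfLE, map_homOfLE_map_homOfLE]
    _ = F.map (homOfLE (hW₂.trans hu)).op u.2 := by
        rw [h₂, map_homOfLE_map_homOfLE]

end

/-- The sections of a presheaf of sets on a topological space, typed by their domains and
with hom-matrix given by local equality, form a symmetric category enriched in the
quantaloid of open subsets of `X`: local equality is reflexive, symmetric and
transitive. -/
theorem stmt_11 {X : Type*} [TopologicalSpace X] (F : (Opens X)ᵒᵖ ⥤ Type*) :
    (∀ s : Σ U : Opens X, F.obj (op U), s.1 ≤ locEq F s s) ∧
    (∀ s t : Σ U : Opens X, F.obj (op U), locEq F s t = locEq F t s) ∧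
    (∀ s t u : Σ U : Opens X, F.obj (op U),
      locEq F s t ⊓ locEq F t u ≤ locEq F s u) :=
  ⟨le_locEq_self, locEq_comm, locEq_inf_locEq_le⟩
end

section
/- Let Q be a unital quantale and (M, A) a Q-enriched category (1 ≤ M(a,a), M(a,b)*M(b,c) ≤ M(a,c)). Let σ : A → Q be a singleton with right adjoint σ* : A → Q, i.e. σ(b)*σ*(c) ≤ M(b,c) for all b,c and 1 ≤ ⨆_{a} σ*(a)*σ(a). Then for every presingleton τ : A → Q (i.e. M(a,b)*τ(b) ≤ τ(a)), the hom of the presingleton category is computed by composition with the right adjoint: ⨆ { f ∈ Q ∣ ∀ a, σ(a)*f ≤ τ(a) } = ⨆_{a∈A} σ*(a) * τ(a). -/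
section Quantale

variable {Q : Type*} [Monoid Q] [CompleteLattice Q] [IsQuantale Q] {ι : Type*}

theorem le_iSup_mul_of_one_le_iSup_mul {g h k : ι → Q} {f : Q}
    (hunit : 1 ≤ ⨆ i, g i * h i) (hf : ∀ i, h i * f ≤ k i) : f ≤ ⨆ i, g i * k i :=
  calc f = 1 * f := (one_mul f).symm
    _ ≤ (⨆ i, g i * h i) * f := mul_le_mul_left hunit f
    _ = ⨆ i, g i * h i * f := Quantale.iSup_mul_distrib
    _ ≤ ⨆ i, g i * k i := iSup_mono fun i => by
      rw [mul_assoc]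
      exact mul_le_mul_right (hf i) _

theorem mul_iSup_mul_le {g k m : ι → Q} {s t : Q}
    (hcounit : ∀ i, s * g i ≤ m i) (hk : ∀ i, m i * k i ≤ t) : s * ⨆ i, g i * k i ≤ t := by
  rw [Quantale.mul_iSup_distrib]
  refine iSup_le fun i => ?_
  rw [← mul_assoc]
  exact (mul_le_mul_left (hcounit i) _).trans (hk i)

end Quantale

theorem stmt_15_general {Q : Type*} [Monoid Q] [CompleteLattice Q] [IsQuantale Q]
    {A : Type*} (M : A → A → Q)
    (σ σs : A → Q)
    (hcounit : ∀ b c, σ b * σs c ≤ M b c)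
    (hunit : (1 : Q) ≤ ⨆ a : A, σs a * σ a)
    (τ : A → Q) (hτ : ∀ a b, M a b * τ b ≤ τ a) :
    sSup {f : Q | ∀ a, σ a * f ≤ τ a} = ⨆ a : A, σs a * τ a :=
  le_antisymm
    (sSup_le fun _ hf => le_iSup_mul_of_one_le_iSup_mul hunit hf)
    (le_sSup fun a => mul_iSup_mul_le (hcounit a) (hτ a))

/-- For a singleton `σ` (a left adjoint distributor with right adjoint `σs`) of a
quantale-enriched category and any presingleton `τ`, the hom `P(σ, τ)` of the
presingleton category is computed by composition with the right adjoint: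
`P(σ, τ) = σ* ∘ τ`. -/
theorem stmt_15 {Q : Type*} [Monoid Q] [CompleteLattice Q] [IsQuantale Q]
    {A : Type*} (M : A → A → Q)
    (hrefl : ∀ a, (1 : Q) ≤ M a a)
    (htrans : ∀ a b c, M a b * M b c ≤ M a c)
    (σ σs : A → Q)
    (hσ : ∀ a b, M a b * σ b ≤ σ a)
    (hσs : ∀ a b, σs a * M a b ≤ σs b)
    (hcounit : ∀ b c, σ b * σs c ≤ M b c)
    (hunit : (1 : Q) ≤ ⨆ a : A, σs a * σ a)
    (τ : A → Q) (hτ : ∀ a b, M a b * τ b ≤ τ a) :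
    sSup {f : Q | ∀ a, σ a * f ≤ τ a} = ⨆ a : A, σs a * τ a :=
  stmt_15_general M σ σs hcounit hunit τ hτ
end

section
/- In particular (dual Yoneda), for a Q-enriched category (M, A) over a unital quantale Q and a singleton σ with right adjoint σ*, one has for every a ∈ A: ⨆ { f ∈ Q ∣ ∀ b, σ(b) * f ≤ M(b,a) } = σ*(a). -/
theorem le_of_one_le_iSup_mul {Q ι : Type*} [Monoid Q] [CompleteLattice Q] [IsQuantale Q]
    {u v : ι → Q} (hunit : 1 ≤ ⨆ i, u i * v i) {f t : Q} (h : ∀ i, u i * (v i * f) ≤ t) :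
    f ≤ t :=
  calc f = 1 * f := (one_mul f).symm
    _ ≤ (⨆ i, u i * v i) * f := mul_le_mul_left hunit f
    _ = ⨆ i, u i * (v i * f) := by simp only [Quantale.iSup_mul_distrib, mul_assoc]
    _ ≤ t := iSup_le h

theorem stmt_16_general {Q : Type*} [Monoid Q] [CompleteLattice Q] [IsQuantale Q]
    {A : Type*} (M : A → A → Q)
    (σ σs : A → Q)
    (hσs : ∀ a b, σs a * M a b ≤ σs b)
    (hcounit : ∀ b c, σ b * σs c ≤ M b c)
    (hunit : (1 : Q) ≤ ⨆ a : A, σs a * σ a)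
    (a : A) :
    sSup {f : Q | ∀ b, σ b * f ≤ M b a} = σs a :=
  IsGreatest.csSup_eq ⟨fun b => hcounit b a, fun _ hf =>
    le_of_one_le_iSup_mul hunit fun c => (mul_le_mul_right (hf c) _).trans (hσs c a)⟩

/-- Dual Yoneda: for a singleton `σ` with right adjoint `σs` of a quantale-enriched
category, the hom from `σ` to the representable presingleton at `a` is `σs a`. -/
theorem stmt_16 {Q : Type*} [Monoid Q] [CompleteLattice Q] [IsQuantale Q]
    {A : Type*} (M : A → A → Q)
    (hrefl : ∀ a, (1 : Q) ≤ M a a)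
    (htrans : ∀ a b c, M a b * M b c ≤ M a c)
    (σ σs : A → Q)
    (hσ : ∀ a b, M a b * σ b ≤ σ a)
    (hσs : ∀ a b, σs a * M a b ≤ σs b)
    (hcounit : ∀ b c, σ b * σs c ≤ M b c)
    (hunit : (1 : Q) ≤ ⨆ a : A, σs a * σ a)
    (a : A) :
    sSup {f : Q | ∀ b, σ b * f ≤ M b a} = σs a :=
  stmt_16_general M σ σs hσs hcounit hunit a
end

section
/- Let Q be a unital quantale, (M, A) a Q-enriched category, and let σ₁, σ₂ : A → Q be presingletons (M(a,b)*σᵢ(b) ≤ σᵢ(a)). If for every a ∈ A the homs from the representable presingletons agree, i.e. ⨆{ f ∣ ∀b, M(b,a)*f ≤ σ₁(b) } = ⨆{ f ∣ ∀b, M(b,a)*f ≤ σ₂(b) }, then σ₁ = σ₂. Hence the Q-category of presingletons of (M,A) is skeletal. -/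
/-! Every presingleton is recovered from its homs out of the representables: by the quantale
Yoneda lemma `P(M(-, a), σ) = σ(a)`, so two presingletons with the same such homs coincide. -/

namespace QuantaleCategory

variable {Q A : Type*} [MulOneClass Q] [CompleteLattice Q]

/-- The hom `P(τ, σ)` of the `Q`-category of presingletons. -/
def presingletonHom (τ σ : A → Q) : Q :=
  sSup {f : Q | ∀ a, τ a * f ≤ σ a}

theorem presingletonHom_representable [MulRightMono Q] {M : A → A → Q}
    (hrefl : ∀ a, (1 : Q) ≤ M a a) {σ : A → Q} (hσ : ∀ a b, M a b * σ b ≤ σ a) (a : A) :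
    presingletonHom (fun b => M b a) σ = σ a := by
  apply le_antisymm
  · refine sSup_le fun f hf => ?_
    calc f ≤ M a a * f := le_mul_of_one_le_left' (hrefl a)
      _ ≤ σ a := hf a
  · exact le_sSup fun b => hσ b a

end QuantaleCategory

open QuantaleCategory in
theorem stmt_19_general {Q : Type*} [Monoid Q] [CompleteLattice Q] [IsQuantale Q]
    {A : Type*} (M : A → A → Q)
    (hrefl : ∀ a, (1 : Q) ≤ M a a)
    (σ₁ σ₂ : A → Q)
    (hσ₁ : ∀ a b, M a b * σ₁ b ≤ σ₁ a)
    (hσ₂ : ∀ a b, M a b * σ₂ b ≤ σ₂ a)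
    (h : ∀ a : A, sSup {f : Q | ∀ b, M b a * f ≤ σ₁ b}
        = sSup {f : Q | ∀ b, M b a * f ≤ σ₂ b}) :
    σ₁ = σ₂ := by
  funext a
  rw [← presingletonHom_representable hrefl hσ₁ a, ← presingletonHom_representable hrefl hσ₂ a]
  exact h a

/-- The quantale-enriched category of presingletons is skeletal: two presingletons with
the same homs from all representable presingletons are equal. -/
theorem stmt_19 {Q : Type*} [Monoid Q] [CompleteLattice Q] [IsQuantale Q]
    {A : Type*} (M : A → A → Q)
    (hrefl : ∀ a, (1 : Q) ≤ M a a)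
    (htrans : ∀ a b c, M a b * M b c ≤ M a c)
    (σ₁ σ₂ : A → Q)
    (hσ₁ : ∀ a b, M a b * σ₁ b ≤ σ₁ a)
    (hσ₂ : ∀ a b, M a b * σ₂ b ≤ σ₂ a)
    (h : ∀ a : A, sSup {f : Q | ∀ b, M b a * f ≤ σ₁ b}
        = sSup {f : Q | ∀ b, M b a * f ≤ σ₂ b}) :
    σ₁ = σ₂ :=
  stmt_19_general M hrefl σ₁ σ₂ hσ₁ hσ₂ h
end
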